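/- The Lobachevsky function Λ satisfies: Λ is continuous on ℝ, odd, π-periodic, and attains its maximum on [0, π] at s = π/6. -/

import Mathlib

open Real

/-- The Lobachevsky function `Λ(s) = -∫₀^s log|2 sin t| dt`. -/
noncomputable def Lob (s : ℝ) : ℝ := -∫ t in (0:ℝ)..s, Real.log |2 * Real.sin t|

namespace LobAux

open Set MeasureTheory intervalIntegral

/-- The integrand. -/
noncomputable def f (t : ℝ) : ℝ := Real.log |2 * Real.sin t|

lemma f_meas : Measurable f :=
  Real.measurable_log.comp ((Real.measurable_sin.const_mul 2).abs)

lemma f_per : Function.Periodic f π := by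
  intro t; unfold f; rw [Real.sin_add_pi, mul_neg, abs_neg]

lemma f_even (t : ℝ) : f (-t) = f t := by
  unfold f; rw [Real.sin_neg, mul_neg, abs_neg]

lemma f_pi_sub (t : ℝ) : f (π - t) = f t := by
  unfold f; rw [Real.sin_pi_sub]

lemma f_int_half : IntervalIntegrable f volume 0 (π/2) := by
  have hπ := Real.pi_pos
  have h2 : (0:ℝ) ≤ π/2 := by positivity
  rw [intervalIntegrable_iff_integrableOn_Ioc_of_le h2]
  have hg : IntervalIntegrable (fun t : ℝ => Real.log 2 + 2 * t ^ (-(1:ℝ)/2)) volume 0 (π/2) :=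
    intervalIntegrable_const.add ((intervalIntegral.intervalIntegrable_rpow'
      (by norm_num)).const_mul 2)
  rw [intervalIntegrable_iff_integrableOn_Ioc_of_le h2] at hg
  refine hg.mono' f_meas.aestronglyMeasurable ?_
  filter_upwards [ae_restrict_mem measurableSet_Ioc] with t ht
  obtain ⟨ht0, ht1⟩ := ht
  have hsin : 0 < Real.sin t := Real.sin_pos_of_pos_of_lt_pi ht0 (by linarith)
  have hr : (0:ℝ) < t ^ (-(1:ℝ)/2) := Real.rpow_pos_of_pos ht0 _
  have hub : f t ≤ Real.log 2 := by
    unfold f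
    rw [abs_of_pos (by linarith)]
    exact Real.log_le_log (by linarith) (by nlinarith [Real.sin_le_one t])
  have hlb : -(Real.log 2 + 2 * t ^ (-(1:ℝ)/2)) ≤ f t := by
    have h1 : t ≤ 2 * Real.sin t := by
      have hms := Real.mul_le_sin ht0.le ht1
      have : t ≤ 2 * (2 / π * t) := by
        rw [show (2:ℝ) * (2 / π * t) = 4 * t / π by ring, le_div_iff₀ hπ]
        nlinarith [Real.pi_le_four]
      linarith
    have h2' : Real.log t ≤ f t := by
      unfold f; rw [abs_of_pos (by linarith)]
      exact Real.log_le_log ht0 h1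
    have h3 : -Real.log t ≤ 2 * t ^ (-(1:ℝ)/2) := by
      have hle : Real.log (t ^ (-(1:ℝ)/2)) ≤ t ^ (-(1:ℝ)/2) - 1 :=
        Real.log_le_sub_one_of_pos hr
      rw [Real.log_rpow ht0] at hle
      nlinarith
    have hlog2 : (0:ℝ) ≤ Real.log 2 := Real.log_nonneg (by norm_num)
    linarith
  rw [Real.norm_eq_abs, abs_le]
  constructor
  · exact hlb
  · have : (0:ℝ) ≤ 2 * t ^ (-(1:ℝ)/2) := by positivity
    linarith

lemma f_int_pi : IntervalIntegrable f volume 0 π := by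
  refine f_int_half.trans ?_
  have h := f_int_half.comp_sub_left π
  rw [sub_zero, show π - π/2 = π/2 by ring] at h
  rw [show (fun x => f (π - x)) = f from funext f_pi_sub] at h
  exact h.symm

lemma f_int_npi : ∀ n : ℕ, IntervalIntegrable f volume 0 (n * π) := by
  intro n
  induction n with
  | zero => simp
  | succ n ih =>
    refine ih.trans ?_
    have h := f_int_pi.comp_sub_right ((n:ℝ) * π)
    rw [zero_add, show (fun x => f (x - (n:ℝ) * π)) = f from
      funext fun x => f_per.sub_nat_mul_eq n] at h
    have e2 : (((n:ℕ) + 1 : ℕ) : ℝ) * π = π + (n:ℝ) * π := by push_cast; ring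
    rw [e2]
    exact h

lemma f_int (a b : ℝ) : IntervalIntegrable f volume a b := by
  have hπ := Real.pi_pos
  obtain ⟨n, hn⟩ := exists_nat_ge (max |a| |b| / π)
  have hbound : max |a| |b| ≤ n * π := by
    rw [div_le_iff₀ hπ] at hn; linarith
  have hpos := f_int_npi n
  have hneg : IntervalIntegrable f volume (-((n:ℝ) * π)) 0 := by
    have h := (IntervalIntegrable.iff_comp_neg).mp hpos
    rw [show (fun x => f (-x)) = f from funext f_even, neg_zero] at h
    exact h.symm
  have htot : IntervalIntegrable f volume (-((n:ℝ) * π)) ((n:ℝ) * π) := hneg.trans hpos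
  refine htot.mono_set ?_
  have h0 : (0:ℝ) ≤ (n:ℝ) * π := by positivity
  apply Set.uIcc_subset_uIcc
  · rw [Set.uIcc_of_le (by linarith)]
    have := (abs_le.mp (le_trans (le_max_left _ _) hbound))
    exact ⟨this.1, this.2⟩
  · rw [Set.uIcc_of_le (by linarith)]
    have := (abs_le.mp (le_trans (le_max_right _ _) hbound))
    exact ⟨this.1, this.2⟩

lemma key : ∫ t in (0:ℝ)..π, f t = 0 := by
  have hπ := Real.pi_pos
  have hint2 : IntervalIntegrable (fun t => f (t + π/2)) volume 0 (π/2) := by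
    have h := (f_int (π/2) π).comp_add_right (π/2)
    rw [show π/2 - π/2 = (0:ℝ) by ring, show π - π/2 = π/2 by ring] at h
    exact h
  have hdup : ∀ᵐ t : ℝ, t ∈ Set.uIoc (0:ℝ) (π/2) → f (2 * t) = f t + f (t + π/2) := by
    have h1 : ∀ᵐ t : ℝ, t ≠ π/2 := by
      rw [MeasureTheory.ae_iff]
      have : {t : ℝ | ¬ t ≠ π/2} = {π/2} := by ext x; simp
      rw [this]; exact measure_singleton _
    filter_upwards [h1] with t hne hmem
    rw [Set.uIoc_of_le (by positivity)] at hmem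
    have ht0 : 0 < t := hmem.1
    have ht1 : t < π/2 := lt_of_le_of_ne hmem.2 hne
    have hs : 0 < Real.sin t := Real.sin_pos_of_pos_of_lt_pi ht0 (by linarith)
    have hc : 0 < Real.cos t := Real.cos_pos_of_mem_Ioo ⟨by linarith, ht1⟩
    unfold f
    rw [Real.sin_add_pi_div_two, Real.sin_two_mul,
      show (2:ℝ) * (2 * Real.sin t * Real.cos t) = (2*Real.sin t) * (2*Real.cos t) by ring,
      abs_mul, Real.log_mul (abs_ne_zero.mpr (by positivity)) (abs_ne_zero.mpr (by positivity))]
  have hsplit : (∫ t in (0:ℝ)..π/2, f (2*t)) =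
      (∫ t in (0:ℝ)..π/2, f t) + ∫ t in (0:ℝ)..π/2, f (t + π/2) := by
    rw [← intervalIntegral.integral_add f_int_half hint2]
    exact intervalIntegral.integral_congr_ae hdup
  have hmul : (∫ t in (0:ℝ)..π/2, f (2*t)) = (2:ℝ)⁻¹ • ∫ x in (0:ℝ)..π, f x := by
    have h := intervalIntegral.integral_comp_mul_left (a := 0) (b := π/2) f
      (two_ne_zero (α := ℝ))
    rw [mul_zero, show (2:ℝ) * (π/2) = π by ring] at h
    exact h
  have hshift : (∫ t in (0:ℝ)..π/2, f (t + π/2)) = ∫ x in (π/2)..π, f x := by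
    have h := intervalIntegral.integral_comp_add_right (a := 0) (b := π/2) f (π/2)
    rw [zero_add, show π/2 + π/2 = π by ring] at h
    exact h
  have hadd : (∫ t in (0:ℝ)..π/2, f t) + (∫ x in (π/2)..π, f x) = ∫ x in (0:ℝ)..π, f x :=
    intervalIntegral.integral_add_adjacent_intervals f_int_half (f_int _ _)
  have : (2:ℝ)⁻¹ * (∫ x in (0:ℝ)..π, f x) = ∫ x in (0:ℝ)..π, f x := by
    rw [← smul_eq_mul, ← hmul, hsplit, hshift]; exact hadd
  linarith

lemma lob_def (s : ℝ) : Lob s = -∫ t in (0:ℝ)..s, f t := rfl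

lemma lob_cont : Continuous Lob := by
  have : Continuous fun s => -∫ t in (0:ℝ)..s, f t :=
    (intervalIntegral.continuous_primitive f_int 0).neg
  exact this

lemma lob_zero : Lob 0 = 0 := by
  rw [lob_def, intervalIntegral.integral_same, neg_zero]

lemma lob_odd (s : ℝ) : Lob (-s) = -Lob s := by
  rw [lob_def, lob_def, neg_neg]
  have h := intervalIntegral.integral_comp_neg (a := 0) (b := s) f
  rw [show (fun x => f (-x)) = f from funext f_even, neg_zero] at h
  rw [intervalIntegral.integral_symm 0 (-s)] at h
  linarith

lemma lob_per (s : ℝ) : Lob (s + π) = Lob s := by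
  rw [lob_def, lob_def]
  have h := f_per.intervalIntegral_add_eq_add 0 s f_int
  rw [zero_add, key, add_zero] at h
  rw [h]

lemma lob_deriv {s : ℝ} (hs : Real.sin s ≠ 0) : HasDerivAt Lob (-f s) s := by
  have h2 : |2 * Real.sin s| ≠ 0 := abs_ne_zero.mpr (mul_ne_zero two_ne_zero hs)
  have hinner : Continuous fun t : ℝ => |2 * Real.sin t| :=
    (continuous_const.mul Real.continuous_sin).abs
  have hcont : ContinuousAt f s := by
    have : ContinuousAt (Real.log ∘ fun t : ℝ => |2 * Real.sin t|) s :=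
      ContinuousAt.comp (Real.continuousAt_log h2) hinner.continuousAt
    exact this
  have h := intervalIntegral.integral_hasDerivAt_right (f_int 0 s)
      f_meas.aestronglyMeasurable.stronglyMeasurableAtFilter hcont
  exact h.neg

lemma lob_mono : StrictMonoOn Lob (Icc 0 (π/6)) := by
  have hπ := Real.pi_pos
  apply strictMonoOn_of_deriv_pos (convex_Icc _ _) lob_cont.continuousOn
  intro x hx
  rw [interior_Icc] at hx
  have hs : 0 < Real.sin x := Real.sin_pos_of_pos_of_lt_pi hx.1 (by linarith [hx.2])
  have hlt : Real.sin x < 1/2 := by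
    have := Real.strictMonoOn_sin (a := x) (b := π/6)
      ⟨by linarith [hx.1], by linarith [hx.2]⟩ ⟨by linarith, by linarith⟩ hx.2
    rwa [Real.sin_pi_div_six] at this
  have hd := (lob_deriv hs.ne').deriv
  rw [hd]
  have hfx : f x < 0 := by
    unfold f
    rw [abs_of_pos (by linarith)]
    exact Real.log_neg (by linarith) (by linarith)
  linarith

lemma lob_anti : StrictAntiOn Lob (Icc (π/6) (5*π/6)) := by
  have hπ := Real.pi_pos
  apply strictAntiOn_of_deriv_neg (convex_Icc _ _) lob_cont.continuousOn
  intro x hx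
  rw [interior_Icc] at hx
  have hs : 0 < Real.sin x := Real.sin_pos_of_pos_of_lt_pi (by linarith [hx.1]) (by linarith [hx.2])
  have hgt : 1/2 < Real.sin x := by
    rcases le_or_gt x (π/2) with h | h
    · have := Real.strictMonoOn_sin (a := π/6) (b := x)
        ⟨by linarith, by linarith⟩ ⟨by linarith [hx.1], h⟩ hx.1
      rwa [Real.sin_pi_div_six] at this
    · have := Real.strictMonoOn_sin (a := π/6) (b := π - x)
        ⟨by linarith, by linarith⟩ ⟨by linarith [hx.2], by linarith⟩ (by linarith [hx.2])
      rwa [Real.sin_pi_div_six, Real.sin_pi_sub] at this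
  have hd := (lob_deriv hs.ne').deriv
  rw [hd]
  have hfx : 0 < f x := by
    unfold f
    rw [abs_of_pos (by linarith)]
    exact Real.log_pos (by linarith)
  linarith

lemma lob_max (s : ℝ) : Lob s ≤ Lob (π/6) := by
  have hπ := Real.pi_pos
  have hper : Function.Periodic Lob π := lob_per
  set u := Int.fract (s / π) * π with hu
  have hu_eq : u = s - (⌊s/π⌋ : ℝ) * π := by
    rw [hu, Int.fract]
    field_simp
  have hs_eq : Lob s = Lob u := by
    rw [hu_eq]
    exact (hper.sub_int_mul_eq ⌊s/π⌋).symm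
  have hu0 : 0 ≤ u := mul_nonneg (Int.fract_nonneg _) hπ.le
  have hu1 : u < π := by
    have := Int.fract_lt_one (s/π)
    calc u = Int.fract (s/π) * π := hu
    _ < 1 * π := by apply mul_lt_mul_of_pos_right this hπ
    _ = π := one_mul π
  rw [hs_eq]
  have h06 : (0:ℝ) ≤ π/6 := by positivity
  have h6 : Lob 0 ≤ Lob (π/6) :=
    lob_mono.monotoneOn ⟨le_refl _, h06⟩ ⟨h06, le_refl _⟩ h06
  rcases le_or_gt u (π/6) with h | h
  · exact lob_mono.monotoneOn ⟨hu0, h⟩ ⟨h06, le_refl _⟩ h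
  rcases le_or_gt u (5*π/6) with h' | h'
  · exact lob_anti.antitoneOn ⟨le_refl _, by linarith⟩ ⟨h.le, h'⟩ h.le
  · have h1 : Lob (π - u) = -Lob u := by
      have e1 : Lob (π - u) = Lob (-u) := by
        rw [show π - u = -u + π by ring]
        exact hper (-u)
      rw [e1, lob_odd]
    have h2 : Lob 0 ≤ Lob (π - u) :=
      lob_mono.monotoneOn ⟨le_refl _, h06⟩ ⟨by linarith, by linarith⟩ (by linarith)
    rw [lob_zero] at h2 h6
    linarith

end LobAux

theorem lob_properties :
    Continuous Lob ∧ (∀ s : ℝ, Lob (-s) = -Lob s) ∧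
      (∀ s : ℝ, Lob (s + π) = Lob s) ∧ (∀ s : ℝ, Lob s ≤ Lob (π / 6)) := by
  exact ⟨LobAux.lob_cont, LobAux.lob_odd, LobAux.lob_per, LobAux.lob_max⟩
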